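/- η-law for xCL_fg (computation form): for every value v, [v] ≲ctx (S ▷ (K ∘ I)) ◁ v and (S ▷ (K ∘ I)) ◁ v ≲ctx [v] (both in the computation sort). -/
import Mathlib


namespace FG

mutual
/-- Values of the fine-grain call-by-value combinatory logic xCL_fg. -/
inductive V : Type
  | I : V
  | K : V
  | S : V
  | K1 (t : C) : V
  | S1 (t : C) : V
  | S2 (s t : C) : V
/-- Computations of xCL_fg. -/
inductive C : Type
  | ret (v : V) : C            -- [v]
  | bull (t s : C) : C         -- t • s
  | rtri (v : V) (s : C) : C   -- v ▷ s
  | ltri (t : C) (v : V) : C   -- t ◁ v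
  | circ (v w : V) : C         -- v ∘ w
end

/-- Labeled transitions `v —u→ t` from values to computations (`LStep v u t`). -/
inductive LStep : V → V → C → Prop
  | S (v : V) : LStep .S v (.ret (.S1 (.ret v)))
  | S1 (t : C) (v : V) : LStep (.S1 t) v (.ret (.S2 t (.ret v)))
  | S2 (t s : C) (v : V) : LStep (.S2 t s) v (.bull (.ltri t v) (.ltri s v))
  | K (v : V) : LStep .K v (.ret (.K1 (.ret v)))
  | K1 (t : C) (v : V) : LStep (.K1 t) v t
  | I (v : V) : LStep .I v (.ret v)

/-- Unlabeled transitions from computations to values: `t → v`. -/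
inductive StepV : C → V → Prop
  | ret (v : V) : StepV (.ret v) v

/-- Unlabeled transitions from computations to computations: `t → t'`. -/
inductive StepC : C → C → Prop
  | bullL {t t' : C} (s : C) : StepC t t' → StepC (.bull t s) (.bull t' s)
  | bullV {t : C} {v : V} (s : C) : StepV t v → StepC (.bull t s) (.rtri v s)
  | ltriL {t t' : C} (v : V) : StepC t t' → StepC (.ltri t v) (.ltri t' v)
  | ltriV {t : C} {v : V} (w : V) : StepV t v → StepC (.ltri t w) (.circ v w)
  | rtriR {s s' : C} (v : V) : StepC s s' → StepC (.rtri v s) (.rtri v s')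
  | rtriV {s : C} {w : V} (v : V) : StepV s w → StepC (.rtri v s) (.circ v w)
  | circ {v w : V} {t : C} : LStep v w t → StepC (.circ v w) t

/-- `t ⇒ t'` between computations. -/
def StepsC : C → C → Prop := Relation.ReflTransGen StepC

/-- `t ⇒ v`: `t` reduces in finitely many steps to the value `v`. -/
def StepsV (t : C) (v : V) : Prop := ∃ t', StepsC t t' ∧ StepV t' v

/-- `t⇓`: the computation `t` reduces to some value. -/
def ConvC (t : C) : Prop := ∃ v, StepsV t v

/-- Applicative simulations for xCL_fg. -/
def IsSim (RV : V → V → Prop) (RC : C → C → Prop) : Prop :=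
  (∀ v w, RV v w → ∀ u t, LStep v u t → ∃ s, LStep w u s ∧ RC t s) ∧
  (∀ t s, RC t s →
    (∀ v, StepV t v → ∃ w, StepsV s w ∧ RV v w) ∧
    (∀ t', StepC t t' → ∃ s', StepsC s s' ∧ RC t' s'))

/-- Applicative similarity on values. -/
def AppSimV (v w : V) : Prop := ∃ RV RC, IsSim RV RC ∧ RV v w

/-- Applicative similarity on computations. -/
def AppSimC (t s : C) : Prop := ∃ RV RC, IsSim RV RC ∧ RC t s

/-- A sorted relation is a congruence if it is compatible with all operators of both sorts. -/
def IsCong (RV : V → V → Prop) (RC : C → C → Prop) : Prop :=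
  RV .S .S ∧ RV .K .K ∧ RV .I .I ∧
  (∀ t s, RC t s → RV (.K1 t) (.K1 s)) ∧
  (∀ t s, RC t s → RV (.S1 t) (.S1 s)) ∧
  (∀ t s t' s', RC t s → RC t' s' → RV (.S2 t t') (.S2 s s')) ∧
  (∀ v w, RV v w → RC (.ret v) (.ret w)) ∧
  (∀ t s t' s', RC t s → RC t' s' → RC (.bull t t') (.bull s s')) ∧
  (∀ v w t s, RV v w → RC t s → RC (.rtri v t) (.rtri w s)) ∧
  (∀ v w t s, RV v w → RC t s → RC (.ltri t v) (.ltri s w)) ∧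
  (∀ v w v' w', RV v w → RV v' w' → RC (.circ v v') (.circ w w'))

/-- Containment in the preorder `O` (the value component of `O` is total). -/
def SubO (RV : V → V → Prop) (RC : C → C → Prop) : Prop :=
  (∀ v w, RV v w → True) ∧ (∀ t s, RC t s → ConvC t → ConvC s)

/-- The contextual preorder (value sort): the greatest congruence contained in `O`. -/
def CtxLeV (v w : V) : Prop := ∃ RV RC, IsCong RV RC ∧ SubO RV RC ∧ RV v w

/-- The contextual preorder (computation sort). -/
def CtxLeC (t s : C) : Prop := ∃ RV RC, IsCong RV RC ∧ SubO RV RC ∧ RC t s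

/-- The step-indexed approximations `Lⁿ = (Lⁿ_v, Lⁿ_c)`. -/
def LrelN : ℕ → (V → V → Prop) × (C → C → Prop)
  | 0 => (fun _ _ => True, fun _ _ => True)
  | n+1 =>
    ( fun v w => ∀ u z, (LrelN n).1 u z → ∀ t, LStep v u t →
        ∃ s, LStep w z s ∧ (LrelN n).2 t s,
      fun t s =>
        (∀ v, StepV t v → ∃ w, StepsV s w ∧ (LrelN n).1 v w) ∧
        (∀ t', StepC t t' → ∃ s', StepsC s s' ∧ (LrelN n).2 t' s') )

/-- The step-indexed logical relation, value sort: `L_v = ⋂ₙ Lⁿ_v`. -/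
def LV (v w : V) : Prop := ∀ n, (LrelN n).1 v w

/-- The step-indexed logical relation, computation sort: `L_c = ⋂ₙ Lⁿ_c`. -/
def LC (t s : C) : Prop := ∀ n, (LrelN n).2 t s

end FG

namespace FG

/-- The computation `[K'([I])]`. -/
abbrev AI : C := .ret (.K1 (.ret .I))

/-- Congruence closure of the η-pairs, together with closure under right
expansion, left contraction, and wrapping with `I ▷ -` (needed for the
simulation proof). Values are tagged `inl`, computations `inr`. -/
inductive Rel : (V ⊕ C) → (V ⊕ C) → Prop
  | rS : Rel (.inl .S) (.inl .S)
  | rK : Rel (.inl .K) (.inl .K)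
  | rI : Rel (.inl .I) (.inl .I)
  | rK1 {t s} : Rel (.inr t) (.inr s) → Rel (.inl (.K1 t)) (.inl (.K1 s))
  | rS1 {t s} : Rel (.inr t) (.inr s) → Rel (.inl (.S1 t)) (.inl (.S1 s))
  | rS2 {t s t' s'} : Rel (.inr t) (.inr s) → Rel (.inr t') (.inr s') →
      Rel (.inl (.S2 t t')) (.inl (.S2 s s'))
  | etaF {v w} : Rel (.inl v) (.inl w) → Rel (.inl v) (.inl (.S2 AI (.ret w)))
  | etaB {v w} : Rel (.inl v) (.inl w) → Rel (.inl (.S2 AI (.ret v))) (.inl w)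
  | ret {v w} : Rel (.inl v) (.inl w) → Rel (.inr (.ret v)) (.inr (.ret w))
  | bull {t s t' s'} : Rel (.inr t) (.inr s) → Rel (.inr t') (.inr s') →
      Rel (.inr (.bull t t')) (.inr (.bull s s'))
  | rtri {v w t s} : Rel (.inl v) (.inl w) → Rel (.inr t) (.inr s) →
      Rel (.inr (.rtri v t)) (.inr (.rtri w s))
  | ltri {v w t s} : Rel (.inl v) (.inl w) → Rel (.inr t) (.inr s) →
      Rel (.inr (.ltri t v)) (.inr (.ltri s w))
  | circ {v w v' w'} : Rel (.inl v) (.inl w) → Rel (.inl v') (.inl w') →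
      Rel (.inr (.circ v v')) (.inr (.circ w w'))
  | rexp {t s s'} : Rel (.inr t) (.inr s') → StepC s s' → Rel (.inr t) (.inr s)
  | lcon {t t' s} : StepC t t' → Rel (.inr t') (.inr s) → Rel (.inr t) (.inr s)
  | rtriIR {t s} : Rel (.inr t) (.inr s) → Rel (.inr t) (.inr (.rtri .I s))
  | rtriIL {t s} : Rel (.inr t) (.inr s) → Rel (.inr (.rtri .I t)) (.inr s)
  | circI {v w} : Rel (.inl v) (.inl w) → Rel (.inr (.circ .I v)) (.inr (.ret w))

mutual
theorem reflV : ∀ v : V, Rel (.inl v) (.inl v)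
  | .I => .rI
  | .K => .rK
  | .S => .rS
  | .K1 t => .rK1 (reflC t)
  | .S1 t => .rS1 (reflC t)
  | .S2 s t => .rS2 (reflC s) (reflC t)
theorem reflC : ∀ t : C, Rel (.inr t) (.inr t)
  | .ret v => .ret (reflV v)
  | .bull t s => .bull (reflC t) (reflC s)
  | .rtri v s => .rtri (reflV v) (reflC s)
  | .ltri t v => .ltri (reflV v) (reflC t)
  | .circ v w => .circ (reflV v) (reflV w)
end

theorem lstep_total (v u : V) : ∃ t, LStep v u t := by
  cases v <;> exact ⟨_, by constructor⟩

theorem lstep_det {v u t t'} (h : LStep v u t) (h' : LStep v u t') : t = t' := by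
  cases h <;> cases h' <;> rfl

theorem stepV_ret {t v} (h : StepV t v) : t = .ret v := by cases h; rfl

theorem stepV_stepC {t v t'} (h : StepV t v) (h' : StepC t t') : False := by
  cases h; cases h'

theorem stepC_det : ∀ {t a b : C}, StepC t a → StepC t b → a = b := by
  intro t a b h
  induction h generalizing b with
  | bullL s h ih =>
    intro h'; cases h' with
    | bullL _ h2 => rw [ih h2]
    | bullV _ h2 => exact (stepV_stepC h2 h).elim
  | bullV s h =>
    intro h'; cases h' with
    | bullL _ h2 => exact (stepV_stepC h h2).elim
    | bullV _ h2 => cases h; cases h2; rfl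
  | ltriL v h ih =>
    intro h'; cases h' with
    | ltriL _ h2 => rw [ih h2]
    | ltriV _ h2 => exact (stepV_stepC h2 h).elim
  | ltriV w h =>
    intro h'; cases h' with
    | ltriL _ h2 => exact (stepV_stepC h h2).elim
    | ltriV _ h2 => cases h; cases h2; rfl
  | rtriR v h ih =>
    intro h'; cases h' with
    | rtriR _ h2 => rw [ih h2]
    | rtriV _ h2 => exact (stepV_stepC h2 h).elim
  | rtriV v h =>
    intro h'; cases h' with
    | rtriR _ h2 => exact (stepV_stepC h h2).elim
    | rtriV _ h2 => cases h; cases h2; rfl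
  | circ h =>
    intro h'; cases h' with
    | circ h2 => exact lstep_det h h2

theorem stepsC_bullL {t t'} (s : C) (h : StepsC t t') :
    StepsC (.bull t s) (.bull t' s) := by
  induction h with
  | refl => exact Relation.ReflTransGen.refl
  | tail _ h2 ih => exact ih.tail (.bullL s h2)

theorem stepsC_rtriR (v : V) {t t'} (h : StepsC t t') :
    StepsC (.rtri v t) (.rtri v t') := by
  induction h with
  | refl => exact Relation.ReflTransGen.refl
  | tail _ h2 ih => exact ih.tail (.rtriR v h2)

theorem stepsC_ltriL (v : V) {t t'} (h : StepsC t t') :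
    StepsC (.ltri t v) (.ltri t' v) := by
  induction h with
  | refl => exact Relation.ReflTransGen.refl
  | tail _ h2 ih => exact ih.tail (.ltriL v h2)

/-- The simulation property, phrased uniformly over both sorts. -/
def Goal : (V ⊕ C) → (V ⊕ C) → Prop
  | .inl v, .inl w => ∀ u u' t, Rel (.inl u) (.inl u') → LStep v u t →
      ∃ s, LStep w u' s ∧ Rel (.inr t) (.inr s)
  | .inr t, .inr s =>
      (∀ v, StepV t v → ∃ w, StepsV s w ∧ Rel (.inl v) (.inl w)) ∧
      (∀ t', StepC t t' → ∃ s', StepsC s s' ∧ Rel (.inr t') (.inr s'))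
  | _, _ => True

theorem sim : ∀ {a b}, Rel a b → Goal a b := by
  intro a b h
  induction h with
  | rS =>
    intro u u' t hu hl; cases hl
    exact ⟨_, .S u', .ret (.rS1 (.ret hu))⟩
  | rK =>
    intro u u' t hu hl; cases hl
    exact ⟨_, .K u', .ret (.rK1 (.ret hu))⟩
  | rI =>
    intro u u' t hu hl; cases hl
    exact ⟨_, .I u', .ret hu⟩
  | rK1 h =>
    intro u u' t hu hl; cases hl
    exact ⟨_, .K1 _ u', h⟩
  | rS1 h =>
    intro u u' t hu hl; cases hl
    exact ⟨_, .S1 _ u', .ret (.rS2 h (.ret hu))⟩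
  | rS2 h h' =>
    intro u u' t hu hl; cases hl
    exact ⟨_, .S2 _ _ u', .bull (.ltri hu h) (.ltri hu h')⟩
  | etaF hvw ih =>
    intro u u' t hu hl
    obtain ⟨s₀, hls₀, hts₀⟩ := ih u u' t hu hl
    refine ⟨_, .S2 AI (.ret _) u', ?_⟩
    have h1 : Rel (.inr t) (.inr (.circ _ u')) := .rexp hts₀ (.circ hls₀)
    have h2 : Rel (.inr t) (.inr (.rtri .I (.circ _ u'))) := .rtriIR h1
    have h3 := Rel.rexp h2 (.rtriR .I (.ltriV u' (.ret _)))
    have h4 := Rel.rexp h3 (.bullV _ (.ret .I))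
    have h5 := Rel.rexp h4 (.bullL _ (.circ (.K1 _ u')))
    exact Rel.rexp h5 (.bullL _ (.ltriV u' (.ret _)))
  | etaB hvw ih =>
    intro u u' t hu hl; cases hl
    obtain ⟨t₀, hl₀⟩ := lstep_total _ u
    obtain ⟨s₀, hls₀, h0⟩ := ih u u' t₀ hu hl₀
    refine ⟨s₀, hls₀, ?_⟩
    have h1 : Rel (.inr (.circ _ u)) (.inr s₀) := .lcon (.circ hl₀) h0
    have h2 := Rel.rtriIL h1
    have h3 := Rel.lcon (.rtriR .I (.ltriV u (.ret _))) h2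
    have h4 := Rel.lcon (.bullV _ (.ret .I)) h3
    have h5 := Rel.lcon (.bullL _ (.circ (.K1 _ u))) h4
    exact Rel.lcon (.bullL _ (.ltriV u (.ret _))) h5
  | ret hvw =>
    refine ⟨?_, ?_⟩
    · intro v₀ hsv; cases hsv
      exact ⟨_, ⟨_, .refl, .ret _⟩, hvw⟩
    · intro t' h2; cases h2
  | bull h h' ih ih' =>
    refine ⟨?_, ?_⟩
    · intro v₀ hsv; cases hsv
    · intro t₁ hstep
      cases hstep with
      | bullL _ h2 =>
        obtain ⟨s₁, hs, hr⟩ := ih.2 _ h2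
        exact ⟨_, stepsC_bullL _ hs, .bull hr h'⟩
      | bullV _ h2 =>
        obtain ⟨w, ⟨s₂, hs, hv2⟩, hrw⟩ := ih.1 _ h2
        cases stepV_ret hv2
        exact ⟨_, (stepsC_bullL _ hs).tail (.bullV _ (.ret _)), .rtri hrw h'⟩
  | rtri hv hc ihv ihc =>
    refine ⟨?_, ?_⟩
    · intro v₀ hsv; cases hsv
    · intro t₁ hstep
      cases hstep with
      | rtriR _ h2 =>
        obtain ⟨s₁, hs, hr⟩ := ihc.2 _ h2
        exact ⟨_, stepsC_rtriR _ hs, .rtri hv hr⟩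
      | rtriV _ h2 =>
        obtain ⟨u', ⟨s₂, hs, hv2⟩, hru⟩ := ihc.1 _ h2
        cases stepV_ret hv2
        exact ⟨_, (stepsC_rtriR _ hs).tail (.rtriV _ (.ret _)), .circ hv hru⟩
  | ltri hv hc ihv ihc =>
    refine ⟨?_, ?_⟩
    · intro v₀ hsv; cases hsv
    · intro t₁ hstep
      cases hstep with
      | ltriL _ h2 =>
        obtain ⟨s₁, hs, hr⟩ := ihc.2 _ h2
        exact ⟨_, stepsC_ltriL _ hs, .ltri hv hr⟩
      | ltriV _ h2 =>
        obtain ⟨u', ⟨s₂, hs, hv2⟩, hru⟩ := ihc.1 _ h2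
        cases stepV_ret hv2
        exact ⟨_, (stepsC_ltriL _ hs).tail (.ltriV _ (.ret _)), .circ hru hv⟩
  | circ hv hv' ihv ihv' =>
    refine ⟨?_, ?_⟩
    · intro v₀ hsv; cases hsv
    · intro t₁ hstep
      cases hstep with
      | circ hl =>
        obtain ⟨s, hls, hr⟩ := ihv _ _ _ hv' hl
        exact ⟨s, .single (.circ hls), hr⟩
  | rexp h hstep ih =>
    refine ⟨?_, ?_⟩
    · intro v₀ hsv
      obtain ⟨w, ⟨s₂, hs, hv2⟩, hr⟩ := ih.1 _ hsv
      exact ⟨w, ⟨s₂, hs.head hstep, hv2⟩, hr⟩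
    · intro t₁ h2
      obtain ⟨s₂, hs, hr⟩ := ih.2 _ h2
      exact ⟨s₂, hs.head hstep, hr⟩
  | lcon hstep h ih =>
    refine ⟨?_, ?_⟩
    · intro v₀ hsv; exact (stepV_stepC hsv hstep).elim
    · intro t₁ h2
      cases stepC_det hstep h2
      exact ⟨_, .refl, h⟩
  | rtriIR h ih =>
    refine ⟨?_, ?_⟩
    · intro v₀ hsv
      obtain ⟨w, ⟨s₂, hs, hv2⟩, hr⟩ := ih.1 _ hsv
      cases stepV_ret hv2
      exact ⟨w, ⟨_, ((stepsC_rtriR .I hs).tail (.rtriV _ (.ret _))).tail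
        (.circ (.I _)), .ret _⟩, hr⟩
    · intro t₁ h2
      obtain ⟨s₁, hs, hr⟩ := ih.2 _ h2
      exact ⟨_, stepsC_rtriR .I hs, .rtriIR hr⟩
  | rtriIL h ih =>
    refine ⟨?_, ?_⟩
    · intro v₀ hsv; cases hsv
    · intro t₁ hstep
      cases hstep with
      | rtriR _ h2 =>
        obtain ⟨s₁, hs, hr⟩ := ih.2 _ h2
        exact ⟨s₁, hs, .rtriIL hr⟩
      | rtriV _ h2 =>
        obtain ⟨w, ⟨s₂, hs, hv2⟩, hr⟩ := ih.1 _ h2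
        cases stepV_ret hv2
        exact ⟨_, hs, .circI hr⟩
  | circI hvw ih =>
    refine ⟨?_, ?_⟩
    · intro v₀ hsv; cases hsv
    · intro t₁ hstep
      cases hstep with
      | circ hl =>
        cases hl
        exact ⟨_, .refl, .ret hvw⟩

theorem conv_aux : ∀ {t t₀ : C}, StepsC t t₀ → ∀ {v s}, StepV t₀ v →
    Rel (.inr t) (.inr s) → ConvC s := by
  intro t t₀ hsteps
  induction hsteps using Relation.ReflTransGen.head_induction_on with
  | refl =>
    intro v s hV h
    obtain ⟨w, hws, _⟩ := (sim h).1 _ hV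
    exact ⟨w, hws⟩
  | head hstep _ ih =>
    intro v s hV h
    obtain ⟨s₁, hs, hr⟩ := (sim h).2 _ hstep
    obtain ⟨w, s₂, hs2, hV2⟩ := ih hV hr
    exact ⟨w, s₂, hs.trans hs2, hV2⟩

theorem Rel_isCong :
    IsCong (fun v w => Rel (.inl v) (.inl w)) (fun t s => Rel (.inr t) (.inr s)) :=
  ⟨.rS, .rK, .rI, fun _ _ h => .rK1 h, fun _ _ h => .rS1 h,
   fun _ _ _ _ h h' => .rS2 h h', fun _ _ h => .ret h,
   fun _ _ _ _ h h' => .bull h h', fun _ _ _ _ hv h => .rtri hv h,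
   fun _ _ _ _ hv h => .ltri hv h, fun _ _ _ _ hv hv' => .circ hv hv'⟩

theorem Rel_subO :
    SubO (fun v w => Rel (.inl v) (.inl w)) (fun t s => Rel (.inr t) (.inr s)) :=
  ⟨fun _ _ _ => trivial, fun _ _ h ⟨_, _, hsteps, hV⟩ => conv_aux hsteps hV h⟩

/-- The reduction steps of `(S ▷ (K ∘ I)) ◁ v` down to `[S''([K'([I])], [v])]`. -/
theorem eta_c1 (v : V) : StepC (.ltri (.rtri .S (.circ .K .I)) v)
    (.ltri (.rtri .S AI) v) := .ltriL v (.rtriR .S (.circ (.K .I)))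
theorem eta_c2 (v : V) : StepC (.ltri (.rtri .S AI) v)
    (.ltri (.circ .S (.K1 (.ret .I))) v) := .ltriL v (.rtriV .S (.ret _))
theorem eta_c3 (v : V) : StepC (.ltri (.circ .S (.K1 (.ret .I))) v)
    (.ltri (.ret (.S1 AI)) v) := .ltriL v (.circ (.S _))
theorem eta_c4 (v : V) : StepC (.ltri (.ret (.S1 AI)) v)
    (.circ (.S1 AI) v) := .ltriV v (.ret _)
theorem eta_c5 (v : V) : StepC (.circ (.S1 AI) v)
    (.ret (.S2 AI (.ret v))) := .circ (.S1 AI v)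

end FG

open FG in
/-- η-law for xCL_fg (computation form). -/
theorem fg_eta_law_computation :
    ∀ v : V,
      CtxLeC (.ret v) (.ltri (.rtri .S (.circ .K .I)) v) ∧
      CtxLeC (.ltri (.rtri .S (.circ .K .I)) v) (.ret v) := by
  intro v
  refine ⟨⟨_, _, Rel_isCong, Rel_subO, ?_⟩, ⟨_, _, Rel_isCong, Rel_subO, ?_⟩⟩
  · have base : Rel (.inr (.ret v)) (.inr (.ret (.S2 AI (.ret v)))) :=
      .ret (.etaF (reflV v))
    exact .rexp (.rexp (.rexp (.rexp (.rexp base (eta_c5 v)) (eta_c4 v))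
      (eta_c3 v)) (eta_c2 v)) (eta_c1 v)
  · have base : Rel (.inr (.ret (.S2 AI (.ret v)))) (.inr (.ret v)) :=
      .ret (.etaB (reflV v))
    exact .lcon (eta_c1 v) (.lcon (eta_c2 v) (.lcon (eta_c3 v)
      (.lcon (eta_c4 v) (.lcon (eta_c5 v) base))))
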